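/- The exponential mechanism with scores −ε·d(i,k)/2 satisfies ε-metric DP when d satisfies the triangle inequality: for the mechanism Pr{Q(r_i)=o_k} = e^{−ε d(i,k)/2} / ∑_l e^{−ε d(i,l)/2}, for all records i, j and all outputs k, Pr{Q(r_i)=o_k} ≤ e^{ε·d(i,j)} · Pr{Q(r_j)=o_k}. -/
import Mathlib


open Finset in
/-- The exponential mechanism with scores `−ε d(i,k)/2` satisfies `ε`-metric DP when the
underlying distance satisfies the triangle inequality. -/
theorem exponential_mechanism_mdp
    {V : Type} [Fintype V]
    (d : V → V → ℝ) (hd0 : ∀ a b, 0 ≤ d a b)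
    (hsymm : ∀ a b, d a b = d b a)
    (htri : ∀ a b c, d a c ≤ d a b + d b c)
    (ε : ℝ) (hε : 0 < ε)
    (Os : Finset V) (hOs : Os.Nonempty)
    (i j k : V) (hk : k ∈ Os) :
    Real.exp (-ε * d i k / 2) / (∑ l ∈ Os, Real.exp (-ε * d i l / 2)) ≤
      Real.exp (ε * d i j) *
        (Real.exp (-ε * d j k / 2) / (∑ l ∈ Os, Real.exp (-ε * d j l / 2))) := by
  set A := ∑ l ∈ Os, Real.exp (-ε * d i l / 2) with hA
  set B := ∑ l ∈ Os, Real.exp (-ε * d j l / 2) with hB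
  have hApos : 0 < A := Finset.sum_pos (fun l _ => Real.exp_pos _) hOs
  have hBpos : 0 < B := Finset.sum_pos (fun l _ => Real.exp_pos _) hOs
  have hnum : Real.exp (-ε * d i k / 2) ≤
      Real.exp (ε * d i j / 2) * Real.exp (-ε * d j k / 2) := by
    rw [← Real.exp_add]
    apply Real.exp_le_exp.mpr
    have h := htri j i k
    rw [hsymm j i] at h
    nlinarith [hε.le]
  have hden : B ≤ Real.exp (ε * d i j / 2) * A := by
    rw [hA, hB, Finset.mul_sum]
    apply Finset.sum_le_sum
    intro l _
    rw [← Real.exp_add]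
    apply Real.exp_le_exp.mpr
    have h := htri i j l
    nlinarith [hε.le]
  have he : Real.exp (ε * d i j / 2) * Real.exp (ε * d i j / 2)
      = Real.exp (ε * d i j) := by
    rw [← Real.exp_add]; ring_nf
  rw [mul_div_assoc', div_le_div_iff₀ hApos hBpos]
  calc Real.exp (-ε * d i k / 2) * B
      ≤ (Real.exp (ε * d i j / 2) * Real.exp (-ε * d j k / 2)) *
        (Real.exp (ε * d i j / 2) * A) :=
        mul_le_mul hnum hden hBpos.le (by positivity)
    _ = (Real.exp (ε * d i j / 2) * Real.exp (ε * d i j / 2)) *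
        Real.exp (-ε * d j k / 2) * A := by ring
    _ = Real.exp (ε * d i j) * Real.exp (-ε * d j k / 2) * A := by rw [he]
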